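/- arXiv:2009.00373 — 2 statements merged into one kernel-verified Lean document; each statement's English description precedes it below -/
import Mathlib

section
/- With L, d, D as above, let S ⊆ L with |S| ≥ 2 and let S' ⊆ L \ S be nonempty with S ∩ S' = ∅. Then D(S ∪ S') ≤ D(S) + Σ_{x ∈ S'} min_{l ∈ S} d(x, l). -/
open Finset

noncomputable def dmin {L : Type*} [DecidableEq L] (d : L → L → ℝ) (x : L) (T : Finset L) : ℝ :=
  sInf ((T.image (d x) : Finset ℝ) : Set ℝ)

noncomputable def aggDiv {L : Type*} [DecidableEq L] (d : L → L → ℝ) (S : Finset L) : ℝ :=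
  ∑ l ∈ S, dmin d l (S.erase l)

section

variable {L : Type*} [DecidableEq L] (d : L → L → ℝ)

lemma dmin_le_dmin_of_subset (x : L) {T T' : Finset L} (hT : T.Nonempty) (hTT' : T ⊆ T') :
    dmin d x T' ≤ dmin d x T :=
  csInf_le_csInf (Finset.finite_toSet _).bddBelow (by exact_mod_cast hT.image (d x))
    (by exact_mod_cast image_subset_image hTT')

variable {S : Finset L} (S' : Finset L)

lemma dmin_union_erase_le_of_mem (hS : 2 ≤ #S) {l : L} (hl : l ∈ S) :
    dmin d l ((S ∪ S').erase l) ≤ dmin d l (S.erase l) := by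
  have hne : (S.erase l).Nonempty := card_pos.mp (by rw [card_erase_of_mem hl]; omega)
  exact dmin_le_dmin_of_subset d l hne (erase_subset_erase _ subset_union_left)

lemma dmin_union_erase_le_of_notMem (hS : S.Nonempty) {x : L} (hx : x ∉ S) :
    dmin d x ((S ∪ S').erase x) ≤ dmin d x S := by
  have hsub : S ⊆ (S ∪ S').erase x := fun y hy =>
    mem_erase.mpr ⟨fun hyx => hx (hyx ▸ hy), mem_union_left _ hy⟩
  exact dmin_le_dmin_of_subset d x hS hsub

theorem aggDiv_union_le (hS : 2 ≤ #S) (hdisj : Disjoint S S') :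
    aggDiv d (S ∪ S') ≤ aggDiv d S + ∑ x ∈ S', dmin d x S := by
  rw [aggDiv, aggDiv, sum_union hdisj]
  gcongr with l hl x hx
  · exact dmin_union_erase_le_of_mem d S' hS hl
  · exact dmin_union_erase_le_of_notMem d S' (card_pos.mp (by omega)) (disjoint_right.mp hdisj hx)

end

theorem stmt4_general {L : Type*} [DecidableEq L] (d : L → L → ℝ)
    (S S' : Finset L) (hS : 2 ≤ S.card) (hdisj : Disjoint S S') :
    aggDiv d (S ∪ S') ≤ aggDiv d S + ∑ x ∈ S', dmin d x S :=
  aggDiv_union_le d S' hS hdisj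

theorem stmt4 {L : Type*} [Fintype L] [DecidableEq L] (d : L → L → ℝ)
    (hsym : ∀ a b, d a b = d b a) (hnn : ∀ a b, 0 ≤ d a b)
    (S S' : Finset L) (hS : 2 ≤ S.card) (hdisj : Disjoint S S') (hne : S'.Nonempty) :
    aggDiv d (S ∪ S') ≤ aggDiv d S + ∑ x ∈ S', dmin d x S :=
  stmt4_general d S S' hS hdisj
end

section
/- With L, d, D, R, F as above, let S ⊆ L with |S| ≥ 2, x ∉ S, d̂ = min_{l ∈ S} d(x, l), D̂ = Σ_{l ∈ S} min( min_{l' ∈ S \ {l}} d(l, l'), d(l, x) ), and suppose F(S ∪ {x}) > F(S). Then D̂ > D(S) − d̂_max − (ω/(1−ω)) · δ_r_max, where d̂_max = max_{y ∈ L \ S} min_{l ∈ S} d(y, l) and δ_r_max = max_{y ∈ L \ S} R(y). -/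
/-!
Adding `x` to `S` contributes `ω R(x) ≤ ω δ_r_max` to the relevance term, while the diversity
term becomes `d̂ + D̂`: the new point contributes its nearest-neighbour distance `d̂ ≤ d̂_max`, and
every old point's nearest-neighbour distance is capped by its distance to `x`. A positive gain
therefore forces `(1 - ω) (d̂_max + D̂) + ω δ_r_max > (1 - ω) D(S)`.
-/

open Finset

section dmin

variable {L : Type*} [DecidableEq L] (d : L → L → ℝ)

lemma dmin_insert (l x : L) {T : Finset L} (hT : T.Nonempty) :
    dmin d l (insert x T) = min (d l x) (dmin d l T) := by
  unfold dmin
  rw [image_insert, coe_insert, csInf_insert (T.image (d l)).bddBelow (by simpa using hT)]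

lemma aggDiv_insert {S : Finset L} (hS : 2 ≤ S.card) {x : L} (hx : x ∉ S) :
    aggDiv d (insert x S) = dmin d x S + ∑ l ∈ S, min (dmin d l (S.erase l)) (d l x) := by
  unfold aggDiv
  rw [sum_insert hx, erase_insert hx]
  congr 1
  refine sum_congr rfl fun l hl => ?_
  have hxl : x ≠ l := ne_of_mem_of_not_mem hl hx |>.symm
  have hne : (S.erase l).Nonempty := card_pos.mp (by rw [card_erase_of_mem hl]; omega)
  rw [erase_insert_of_ne hxl, dmin_insert d l x hne, min_comm]

end dmin

lemma le_csSup_image {α : Type*} {s : Finset α} (f : α → ℝ) {y : α} (hy : y ∈ s) :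
    f y ≤ sSup ((s.image f : Finset ℝ) : Set ℝ) :=
  le_csSup (s.image f).bddAbove (by simpa using mem_image_of_mem f hy)

lemma lt_of_weighted_gain {ω r a D E sR Mr Ma : ℝ} (hω0 : 0 ≤ ω) (hω1 : ω < 1)
    (hgain : ω * (r + sR) + (1 - ω) * (a + E) > ω * sR + (1 - ω) * D)
    (hr : r ≤ Mr) (ha : a ≤ Ma) :
    E > D - Ma - ω / (1 - ω) * Mr := by
  have h1ω : 0 < 1 - ω := by linarith
  rw [gt_iff_lt, ← mul_lt_mul_iff_right₀ h1ω, mul_sub, mul_sub, ← mul_assoc,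
    mul_div_cancel₀ ω h1ω.ne']
  linarith [mul_le_mul_of_nonneg_left hr hω0, mul_le_mul_of_nonneg_left ha h1ω.le]

theorem stmt12_general {L : Type*} [Fintype L] [DecidableEq L] (d : L → L → ℝ)
    (R : L → ℝ) (ω : ℝ) (hω0 : 0 < ω) (hω1 : ω < 1)
    (S : Finset L) (hS : 2 ≤ S.card) (x : L) (hx : x ∉ S)
    (hgain : ω * ∑ l ∈ insert x S, R l + (1 - ω) * aggDiv d (insert x S) >
      ω * ∑ l ∈ S, R l + (1 - ω) * aggDiv d S) :
    ∑ l ∈ S, min (dmin d l (S.erase l)) (d l x) >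
      aggDiv d S - sSup ((Sᶜ.image (fun y => dmin d y S) : Finset ℝ) : Set ℝ) -
        (ω / (1 - ω)) * sSup ((Sᶜ.image R : Finset ℝ) : Set ℝ) := by
  rw [sum_insert hx, aggDiv_insert d hS hx] at hgain
  have hxc : x ∈ Sᶜ := mem_compl.mpr hx
  exact lt_of_weighted_gain hω0.le hω1 hgain (le_csSup_image R hxc)
    (le_csSup_image (fun y => dmin d y S) hxc)

theorem stmt12 {L : Type*} [Fintype L] [DecidableEq L] (d : L → L → ℝ)
    (hsym : ∀ a b, d a b = d b a) (hnn : ∀ a b, 0 ≤ d a b)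
    (R : L → ℝ) (hR : ∀ l, 0 ≤ R l) (ω : ℝ) (hω0 : 0 < ω) (hω1 : ω < 1)
    (S : Finset L) (hS : 2 ≤ S.card) (x : L) (hx : x ∉ S)
    (hgain : ω * ∑ l ∈ insert x S, R l + (1 - ω) * aggDiv d (insert x S) >
      ω * ∑ l ∈ S, R l + (1 - ω) * aggDiv d S) :
    ∑ l ∈ S, min (dmin d l (S.erase l)) (d l x) >
      aggDiv d S - sSup ((Sᶜ.image (fun y => dmin d y S) : Finset ℝ) : Set ℝ) -
        (ω / (1 - ω)) * sSup ((Sᶜ.image R : Finset ℝ) : Set ℝ) :=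
  stmt12_general d R ω hω0 hω1 S hS x hx hgain
end
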